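/- Let R ∈ H₀ be a completely integrally closed ring such that R ≠ T(R). Then there is no ring T properly containing R such that Spec(R) = Spec(T). -/

import Mathlib

/-!
Suppose `R ⊊ T` with `Spec(R) = Spec(T)` and pick `t ∈ T \ R`. Since `R ≠ T(R)` there is a
non-zero-divisor `c` of `R` that is not a unit; it lies in a maximal ideal `M`, and `M` is an
ideal of `T`, so `c tⁿ ∈ M ⊆ R` for every `n`. Hence `ct / c ∈ T(R)` is almost integral, so
`ct = cr` for some `r ∈ R` by complete integral closure. As `c` is not nilpotent, some prime `P`
of `R` avoids it; `P` is a prime of `T` containing `c (t - r) = 0`, so `t - r ∈ P ⊆ R`.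
-/

/-- A subset `S` of a ring `A` is (the underlying set of) a prime ideal of the subring `B`. -/
def IsPrimeIdealSetOf {A : Type*} [CommRing A] (B : Subring A) (S : Set A) : Prop :=
  ∃ I : Ideal B, I.IsPrime ∧ Subtype.val '' (I : Set B) = S

/-- `Spec(R) = Spec(T)` for a subring `R` of `T`: a subset of `T` is a prime ideal of `T`
iff it is a prime ideal of `R`. -/
def SpecEq {T : Type*} [CommRing T] (R : Subring T) : Prop :=
  ∀ S : Set T, (∃ J : Ideal T, J.IsPrime ∧ (J : Set T) = S) ↔ IsPrimeIdealSetOf R S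
/-- An ideal `P` of `R` is divided if it is comparable with every ideal of `R`. -/
def Ideal.IsDivided {R : Type*} [CommRing R] (P : Ideal R) : Prop :=
  ∀ I : Ideal R, I ≤ P ∨ P ≤ I

/-- `R ∈ H` : the nilradical of `R` is a divided prime ideal. -/
def MemH (R : Type*) [CommRing R] : Prop :=
  (nilradical R).IsPrime ∧ (nilradical R).IsDivided
/-- `R ∈ H₀` : `R ∈ H` and `Nil(R) = Z(R)` (the nilradical is the set of
zero-divisors). -/
def MemH0 (R : Type*) [CommRing R] : Prop :=
  MemH R ∧ (nilradical R : Set R) = {x : R | x ∉ nonZeroDivisors R}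

/-- `R` is completely integrally closed (in its total quotient ring): every `x ∈ T(R)`
such that `c·xⁿ ∈ R` for all `n ≥ 1` and some non-zero-divisor `c` of `R` lies in `R`. -/
def CompletelyIntegrallyClosed (R : Type*) [CommRing R] : Prop :=
  ∀ x : FractionRing R,
    (∃ c ∈ nonZeroDivisors R, ∀ n : ℕ, 1 ≤ n →
      algebraMap R (FractionRing R) c * x ^ n ∈ (algebraMap R (FractionRing R)).range) →
    x ∈ (algebraMap R (FractionRing R)).range

namespace SpecEq

variable {T : Type*} [CommRing T] {R : Subring T}

theorem mul_mem_of_mem_isPrime (hspec : SpecEq R) {P : Ideal R} (hP : P.IsPrime) {c : R}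
    (hc : c ∈ P) (t : T) : (c : T) * t ∈ R := by
  obtain ⟨J, -, hJ⟩ := (hspec _).2 ⟨P, hP, rfl⟩
  have hcJ : (c : T) ∈ (J : Set T) := hJ ▸ ⟨c, hc, rfl⟩
  have hct : (c : T) * t ∈ (J : Set T) := J.mul_mem_right t hcJ
  rw [hJ] at hct
  obtain ⟨m, -, hm⟩ := hct
  exact hm ▸ m.2

theorem mem_of_mul_eq_zero (hspec : SpecEq R) {c : R} (hc : ¬IsNilpotent c) {s : T}
    (hs : (c : T) * s = 0) : s ∈ R := by
  obtain ⟨P, hP, hcP⟩ : ∃ P : Ideal R, P.IsPrime ∧ c ∉ P := by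
    simpa [← mem_nilradical, nilradical_eq_sInf, Ideal.mem_sInf] using hc
  obtain ⟨J, hJ, hJP⟩ := (hspec _).2 ⟨P, hP, rfl⟩
  have hcJ : (c : T) ∉ J := by
    rw [← SetLike.mem_coe, hJP]
    rintro ⟨m, hm, hmc⟩
    exact hcP (Subtype.ext hmc ▸ hm)
  have hsJ : s ∈ (J : Set T) := (hJ.mem_or_mem (hs ▸ J.zero_mem)).resolve_left hcJ
  rw [hJP] at hsJ
  obtain ⟨m, -, hm⟩ := hsJ
  exact hm ▸ m.2

end SpecEq

theorem exists_not_isUnit_mem_nonZeroDivisors {R : Type*} [CommRing R]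
    (h : ¬Function.Surjective (algebraMap R (FractionRing R))) :
    ∃ c ∈ nonZeroDivisors R, ¬IsUnit c := by
  rw [← IsFractionRing.self_iff_surjective, IsFractionRing.self_iff_nonZeroDivisors_le_isUnit,
    SetLike.not_le_iff_exists] at h
  exact h

theorem CompletelyIntegrallyClosed.dvd_of_pow_dvd_mul_pow {R : Type*} [CommRing R]
    (hR : CompletelyIntegrallyClosed R) {c b : R} (hc : c ∈ nonZeroDivisors R)
    (h : ∀ n : ℕ, 1 ≤ n → c ^ n ∣ c * b ^ n) : c ∣ b := by
  set f := algebraMap R (FractionRing R)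
  set x := IsLocalization.mk' (FractionRing R) b ⟨c, hc⟩
  have hx : x * f c = f b := IsLocalization.mk'_spec _ b ⟨c, hc⟩
  have hint (n : ℕ) (hn : 1 ≤ n) : f c * x ^ n ∈ f.range := by
    obtain ⟨a, ha⟩ := h n hn
    refine ⟨a, (IsLocalization.map_units (FractionRing R)
      (⟨c ^ n, pow_mem hc n⟩ : nonZeroDivisors R)).mul_left_cancel ?_⟩
    calc f (c ^ n) * f a = f c * (x * f c) ^ n := by rw [← map_mul, ← ha, hx, map_mul, map_pow]
      _ = f (c ^ n) * (f c * x ^ n) := by rw [map_pow]; ring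
  obtain ⟨r, hr⟩ := hR x ⟨c, hc, hint⟩
  exact ⟨r, IsFractionRing.injective R (FractionRing R) (by rw [map_mul, hr, mul_comm, hx])⟩

theorem stmt15_general {T : Type*} [CommRing T] (R : Subring T)
    (hcic : CompletelyIntegrallyClosed ↥R)
    (hneq : ¬ Function.Surjective (algebraMap ↥R (FractionRing ↥R)))
    (hproper : R ≠ ⊤) : ¬ SpecEq R := by
  intro hspec
  obtain ⟨t, ht⟩ : ∃ t : T, t ∉ R := by
    simpa [Subring.eq_top_iff'] using hproper
  obtain ⟨c, hc, hcu⟩ := exists_not_isUnit_mem_nonZeroDivisors hneq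
  have : Nontrivial R := not_subsingleton_iff_nontrivial.mp fun _ ↦ hcu (isUnit_of_subsingleton c)
  obtain ⟨M, hM, hcM⟩ := exists_max_ideal_of_mem_nonunits hcu
  have hct (n : ℕ) : (c : T) * t ^ n ∈ R := hspec.mul_mem_of_mem_isPrime hM.isPrime hcM _
  obtain ⟨r, hr⟩ := hcic.dvd_of_pow_dvd_mul_pow (b := ⟨c * t, pow_one t ▸ hct 1⟩) hc
    fun n _ ↦ ⟨⟨_, hct n⟩, Subtype.ext (by push_cast; ring)⟩
  have hcr : (c : T) * (t - r) = 0 := by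
    rw [mul_sub, ← Subring.coe_mul, ← hr, sub_self]
  have hnil : ¬IsNilpotent c := by
    rintro ⟨n, hn⟩
    exact zero_notMem_nonZeroDivisors (hn ▸ pow_mem hc n)
  exact ht (by simpa using R.add_mem (hspec.mem_of_mul_eq_zero hnil hcr) r.2)

/-- Let `R ∈ H₀` be completely integrally closed with `R ≠ T(R)`.  Then
there is no ring `T` properly containing `R` with `Spec(R) = Spec(T)`: for any ring `T`
and any realization of `R` as a proper subring of `T`, `Spec(R) ≠ Spec(T)`. -/
theorem stmt15 {T : Type*} [CommRing T] (R : Subring T)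
    (h0 : MemH0 ↥R)
    (hcic : CompletelyIntegrallyClosed ↥R)
    (hneq : ¬ Function.Surjective (algebraMap ↥R (FractionRing ↥R)))
    (hproper : R ≠ ⊤) : ¬ SpecEq R :=
  stmt15_general R hcic hneq hproper
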